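/- Let d be a positive integer such that d + 1 is a prime power, let F be a finite field with |F| = d + 1, and let y be a generator of the multiplicative group Fˣ. Then the function f : ℤ/dℤ → F defined by f(j) = y^{j̄}, where j̄ ∈ {0,…,d−1} is the canonical representative of j (this is well defined since y has multiplicative order d), is differentially 1-uniform from the additive group ℤ/dℤ to the additive group of F. -/
import Mathlib


/-- A function `f : G → H` between additive groups is differentially 1-uniform if for
every `(a, b) ≠ (0, 0)` the equation `f (x + a) - f x = b` has at most one solution. -/
def DiffOneUniform {G H : Type*} [AddGroup G] [AddGroup H] (f : G → H) : Prop :=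
  ∀ a : G, ∀ b : H, ¬(a = 0 ∧ b = 0) →
    ∀ x y : G, f (x + a) - f x = b → f (y + a) - f y = b → x = y

/-- If `d + 1` is a prime power, `F` is a field of order `d + 1` and `y` generates `Fˣ`,
then `j ↦ y^j` is a differentially 1-uniform function from `ℤ/dℤ` to `(F, +)`. -/
theorem diffOneUniform_powers_of_generator (d : ℕ) (hd : 0 < d)
    (F : Type*) [Field F] [Fintype F] (hF : Fintype.card F = d + 1)
    (y : Fˣ) (hy : Subgroup.zpowers y = ⊤) :
    DiffOneUniform (fun j : ZMod d => ((y : F) ^ (j.val) : F)) := by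
  haveI : NeZero d := ⟨hd.ne'⟩
  have hord : orderOf y = d := by
    rw [orderOf_eq_card_of_forall_mem_zpowers (fun x => hy ▸ Subgroup.mem_top x),
      Nat.card_units, Nat.card_eq_fintype_card, hF]
    simp
  intro a b hab x z hx hz
  simp only at hx hz
  have key : ∀ w : ZMod d, (y : F) ^ ((w + a).val) = (y : F) ^ w.val * (y : F) ^ a.val := by
    intro w
    have h1 : y ^ ((w + a).val) = y ^ (w.val + a.val) := by
      rw [pow_eq_pow_iff_modEq, hord, ZMod.val_add]
      exact Nat.mod_modEq _ _
    have := congrArg (Units.val) h1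
    simpa [pow_add] using this
  rw [key x] at hx
  rw [key z] at hz
  rcases eq_or_ne a 0 with rfl | ha
  · exfalso
    apply hab
    refine ⟨rfl, ?_⟩
    rw [← hx]
    simp [ZMod.val_zero]
  · have hne : (y : F) ^ a.val ≠ 1 := by
      intro h
      have hu : y ^ a.val = 1 := Units.ext (by simpa using h)
      have hdvd : d ∣ a.val := by
        have h2 := orderOf_dvd_of_pow_eq_one hu
        rwa [hord] at h2
      have hlt : a.val < d := ZMod.val_lt a
      have hz0 : a.val = 0 := Nat.eq_zero_of_dvd_of_lt hdvd hlt
      exact ha (by rwa [ZMod.val_eq_zero] at hz0)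
    have heq : (y : F) ^ x.val = (y : F) ^ z.val := by
      have hfac : (y : F) ^ x.val * ((y : F) ^ a.val - 1) =
          (y : F) ^ z.val * ((y : F) ^ a.val - 1) := by
        rw [mul_sub, mul_sub, mul_one, mul_one, hx, hz]
      exact mul_right_cancel₀ (sub_ne_zero.mpr hne) hfac
    have hu : y ^ x.val = y ^ z.val := Units.ext (by simpa using heq)
    have hmod : x.val ≡ z.val [MOD d] := by
      have := (pow_eq_pow_iff_modEq).mp hu
      rwa [hord] at this
    have : x.val = z.val :=
      Nat.ModEq.eq_of_lt_of_lt hmod (ZMod.val_lt x) (ZMod.val_lt z)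
    exact ZMod.val_injective d this
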